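/- Every real root t of the polynomial f(t,a,b) = t⁴ − t³ + ((32 + (1+a)(1+b))/100)·t² − ((16 + 3(1+a)(1+b))/500)·t + ((1+a)(1+b)(4 − (1−a)(1−b)))/5000, for any fixed a, b ∈ [−1, 1], satisfies t ≤ (16 + √13)/45. -/
import Mathlib


/-- Every real root t of the quartic f(t,a,b), for fixed a, b ∈ [−1, 1],
satisfies t ≤ (16 + √13)/45. -/
theorem f_roots_le_tstar (t a b : ℝ)
    (ha : -1 ≤ a ∧ a ≤ 1) (hb : -1 ≤ b ∧ b ≤ 1)
    (hroot : t^4 - t^3 + ((32 + (1+a)*(1+b)) / 100) * t^2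
      - ((16 + 3*(1+a)*(1+b)) / 500) * t
      + ((1+a)*(1+b)*(4 - (1-a)*(1-b))) / 5000 = 0) :
    t ≤ (16 + Real.sqrt 13) / 45 := by
  obtain ⟨ha1, ha2⟩ := ha
  obtain ⟨hb1, hb2⟩ := hb
  by_contra hcon
  push_neg at hcon
  have hsq : Real.sqrt 13 ^ 2 = 13 := Real.sq_sqrt (by norm_num)
  have hs0 : 0 ≤ Real.sqrt 13 := Real.sqrt_nonneg 13
  have h36 : (18:ℝ)/5 ≤ Real.sqrt 13 := by nlinarith [hsq, hs0]
  have h45 : Real.sqrt 13 < 45*t - 16 := by linarith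
  have hQ : 0 < 225*t^2 - 160*t + 27 := by nlinarith [h45, hsq, h36]
  have hu2 : 0 < t - 43/100 := by linarith
  have he1 : (0:ℝ) ≤ 1 + a := by linarith
  have he2 : (0:ℝ) ≤ 1 - a := by linarith
  have he3 : (0:ℝ) ≤ 1 + b := by linarith
  have he4 : (0:ℝ) ≤ 1 - b := by linarith
  rcases le_or_gt t (3/5) with h35 | h35
  · -- t ∈ (t*, 3/5] : use the SOS-with-multipliers certificate
    have hu1 : (0:ℝ) ≤ 3/5 - t := by linarith
    linarith [hroot,
      mul_nonneg (sq_nonneg (a+5*t-2)) he3,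
      mul_nonneg (mul_nonneg (sq_nonneg (a+5*t-2)) he3) he4,
      mul_nonneg (mul_nonneg (sq_nonneg (a+5*t-2)) he3) hu2.le,
      mul_nonneg (sq_nonneg (a+5*t-2)) (mul_nonneg hu2.le hu2.le),
      mul_nonneg (sq_nonneg (b+5*t-2)) he1,
      mul_nonneg (mul_nonneg (sq_nonneg (b+5*t-2)) he1) he2,
      mul_nonneg (mul_nonneg (sq_nonneg (b+5*t-2)) he1) hu2.le,
      mul_nonneg (sq_nonneg (a-b)) (mul_nonneg hu1 hu1),
      mul_nonneg (sq_nonneg (2*a-b+5*t-2)) (mul_nonneg hu2.le hu2.le),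
      sq_nonneg (3*a+b+20*t-8),
      mul_nonneg (sq_nonneg (3*a+b+20*t-8)) hu2.le,
      mul_nonneg (mul_nonneg (sq_nonneg (3*a+b+20*t-8)) hu1) hu2.le,
      mul_nonneg he2 hQ.le,
      mul_pos hu2 hQ,
      mul_pos hQ hQ,
      mul_nonneg (mul_nonneg he1 he2) hQ.le,
      mul_nonneg (mul_nonneg he1 he3) hQ.le,
      mul_nonneg (mul_nonneg he1 hu1) hQ.le,
      mul_nonneg (mul_nonneg he2 he4) hQ.le,
      mul_nonneg (mul_nonneg he2 hu2.le) hQ.le,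
      mul_nonneg (mul_nonneg he3 he4) hQ.le]
  · -- t > 3/5 : the quartic is plainly positive
    have hs : (0:ℝ) ≤ (1+a)*(1+b) := mul_nonneg he1 he3
    have hp4 : (1-a)*(1-b) ≤ 4 := by nlinarith [mul_nonneg he2 he4]
    have hw : (0:ℝ) ≤ 50*t^2 - 30*t + 4 - (1-a)*(1-b) := by nlinarith [hp4]
    have hpos : (0:ℝ) < 40*t*(5*t-1)*(5*t-2)^2 := by
      have h1 : (0:ℝ) < 40*t := by linarith
      have h2 : (0:ℝ) < 5*t-1 := by linarith
      have h3 : (0:ℝ) < (5*t-2)^2 := by nlinarith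
      positivity
    linarith [hroot, mul_nonneg hs hw, hpos]
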